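/- arXiv:1804.08188 — 5 statements merged into one kernel-verified Lean document; each statement's English description precedes it below -/
import Mathlib

section
/- For every real number α > 0 and integer n ≥ 2, the function ψ_α(r) = 2·arctan(α·r) solves the stationary real heat flow ODE: ψ_α''(r) + ((2n-1)/r)·ψ_α'(r) - η(ψ_α(r))/r² = 0 for all r > 0, where η(x) = (2n-2)·sin(x) + sin(2x)/2, and moreover ψ_α(0) = 0 and ψ_α'(0) = 2α. -/
theorem psi_solves_stationary_ode (n : ℤ) (hn : 2 ≤ n) (α : ℝ) (hα : 0 < α)
    (η ψ : ℝ → ℝ)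
    (hη : ∀ x, η x = (2 * (n : ℝ) - 2) * Real.sin x + Real.sin (2 * x) / 2)
    (hψ : ∀ r, ψ r = 2 * Real.arctan (α * r)) :
    (∀ r > (0 : ℝ),
      deriv (deriv ψ) r + ((2 * (n : ℝ) - 1) / r) * deriv ψ r - η (ψ r) / r ^ 2 = 0) ∧
    ψ 0 = 0 ∧ deriv ψ 0 = 2 * α := by
  have hψfun : ψ = fun r => 2 * Real.arctan (α * r) := funext hψ
  have hpos : ∀ r : ℝ, (0:ℝ) < 1 + (α * r)^2 := fun r => by positivity
  have hD1 : ∀ r : ℝ, HasDerivAt ψ (2 * α / (1 + (α * r)^2)) r := by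
    intro r
    rw [hψfun]
    have h := ((Real.hasDerivAt_arctan (α * r)).comp r
      ((hasDerivAt_id r).const_mul α)).const_mul 2
    refine h.congr_deriv ?_
    ring
  have hderiv : deriv ψ = fun r => 2 * α / (1 + (α * r)^2) := by
    funext r; exact (hD1 r).deriv
  have hD2 : ∀ r : ℝ, HasDerivAt (deriv ψ)
      (-(4 * α^3 * r) / (1 + (α * r)^2)^2) r := by
    intro r
    rw [hderiv]
    have hg : HasDerivAt (fun r : ℝ => 1 + (α * r)^2) (2 * α^2 * r) r := by
      have := (((hasDerivAt_id r).const_mul α).pow 2).const_add 1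
      refine this.congr_deriv ?_; simp; ring
    have h := (hasDerivAt_const r (2 * α)).div hg (ne_of_gt (hpos r))
    refine h.congr_deriv ?_
    ring
  refine ⟨?_, ?_, ?_⟩
  · intro r hr
    rw [(hD2 r).deriv, hderiv, hη, hψ]
    set t := α * r with ht
    have hs : Real.sqrt (1 + t^2) ^ 2 = 1 + t^2 := Real.sq_sqrt (by positivity)
    have hsne : Real.sqrt (1 + t^2) ≠ 0 := by positivity
    have hsin : Real.sin (2 * Real.arctan t) = 2 * t / (1 + t^2) := by
      rw [Real.sin_two_mul, Real.sin_arctan, Real.cos_arctan]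
      field_simp
      rw [hs]
    have hcos : Real.cos (2 * Real.arctan t) = (1 - t^2) / (1 + t^2) := by
      rw [Real.cos_two_mul, Real.cos_arctan]
      rw [div_pow, hs]
      field_simp
      ring
    have h4 : Real.sin (2 * (2 * Real.arctan t)) = 4 * t * (1 - t^2) / (1 + t^2)^2 := by
      rw [Real.sin_two_mul, hsin, hcos]
      field_simp
      ring
    rw [h4, hsin]
    have hne : (1 + t^2) ≠ 0 := ne_of_gt (by positivity)
    have hrne : r ≠ 0 := ne_of_gt hr
    field_simp [ht]
    ring
  · rw [hψ]; simp
  · rw [hderiv]; simp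
end

section
/- There exists a constant B > 0, independent of ε ∈ (0, 1/4), such that the function f_ε defined piecewise by f_ε(r) = 1/ε on [0,ε], 1/r on [ε,1/2], 4(1-r) on [1/2,1] satisfies ∫₀¹ |f_ε(r)/r|² r³ dr ≤ ∫₀¹ |f_ε'(r)|² r³ dr ≤ (1 + B/|log ε|) ∫₀¹ |f_ε(r)/r|² r³ dr. -/
open MeasureTheory Set intervalIntegral Real

lemma hardy_piece {a b : ℝ} (hab : a < b) {g h : ℝ → ℝ}
    (hh : IntervalIntegrable h volume a b)
    (heq : ∀ x ∈ Set.Ioo a b, g x = h x) :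
    IntervalIntegrable g volume a b ∧ (∫ x in a..b, g x) = ∫ x in a..b, h x := by
  have hb : ∀ᵐ x : ℝ, x ≠ b := by
    refine (MeasureTheory.ae_iff).2 ?_
    simpa using (by simp : volume ({b} : Set ℝ) = 0)
  have hIoc : ∀ᵐ x : ℝ, x ∈ Set.Ioc a b → g x = h x := by
    filter_upwards [hb] with x hx hxm
    exact heq x ⟨hxm.1, lt_of_le_of_ne hxm.2 hx⟩
  constructor
  · rw [intervalIntegrable_iff_integrableOn_Ioc_of_le hab.le] at hh ⊢
    refine hh.congr ?_
    filter_upwards [ae_restrict_mem measurableSet_Ioc, ae_restrict_of_ae hIoc] with x h1 h2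
    exact (h2 h1).symm
  · refine intervalIntegral.integral_congr_ae ?_
    rw [Set.uIoc_of_le hab.le]
    exact hIoc

set_option maxHeartbeats 1000000 in
theorem near_saturation_of_hardy :
    ∃ B > (0 : ℝ), ∀ ε : ℝ, 0 < ε → ε < 1 / 4 →
      ∀ f : ℝ → ℝ,
        (∀ r, f r = if r ≤ ε then 1 / ε else if r ≤ 1 / 2 then 1 / r else 4 * (1 - r)) →
        (∫ r in (0:ℝ)..1, (f r / r) ^ 2 * r ^ 3)
            ≤ (∫ r in (0:ℝ)..1, (deriv f r) ^ 2 * r ^ 3) ∧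
        (∫ r in (0:ℝ)..1, (deriv f r) ^ 2 * r ^ 3)
            ≤ (1 + B / |Real.log ε|) * ∫ r in (0:ℝ)..1, (f r / r) ^ 2 * r ^ 3 := by
  refine ⟨3, by norm_num, ?_⟩
  intro ε hε h4 f hf
  have hε2 : ε < 1/2 := by linarith
  -- the A-integrand pieces
  have A1 : IntervalIntegrable (fun r => (f r / r) ^ 2 * r ^ 3) volume 0 ε ∧
      (∫ r in (0:ℝ)..ε, (f r / r) ^ 2 * r ^ 3) = ∫ x in (0:ℝ)..ε, x / ε^2 := by
    refine hardy_piece hε (by apply Continuous.intervalIntegrable; fun_prop) ?_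
    intro x hx
    rw [hf x, if_pos hx.2.le]
    have hx0 : x ≠ 0 := ne_of_gt hx.1
    field_simp
  have A2 : IntervalIntegrable (fun r => (f r / r) ^ 2 * r ^ 3) volume ε (1/2) ∧
      (∫ r in ε..(1/2:ℝ), (f r / r) ^ 2 * r ^ 3) = ∫ x in ε..(1/2:ℝ), 1/x := by
    refine hardy_piece hε2 ?_ ?_
    · refine ContinuousOn.intervalIntegrable ?_
      apply ContinuousOn.div continuousOn_const continuousOn_id
      intro x hx
      rw [Set.uIcc_of_le hε2.le] at hx
      exact ne_of_gt (lt_of_lt_of_le hε hx.1)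
    · intro x hx
      rw [hf x, if_neg (not_le.2 hx.1), if_pos hx.2.le]
      have hx0 : x ≠ 0 := ne_of_gt (hε.trans hx.1)
      field_simp
  have A3 : IntervalIntegrable (fun r => (f r / r) ^ 2 * r ^ 3) volume (1/2) 1 ∧
      (∫ r in (1/2:ℝ)..1, (f r / r) ^ 2 * r ^ 3) = ∫ x in (1/2:ℝ)..1, 16*(1-x)^2*x := by
    refine hardy_piece (by norm_num) (by apply Continuous.intervalIntegrable; fun_prop) ?_
    intro x hx
    rw [hf x, if_neg (not_le.2 (h4.trans (by linarith [hx.1]))), if_neg (not_le.2 hx.1)]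
    have hx0 : x ≠ 0 := by linarith [hx.1]
    field_simp
    ring
  -- the D-integrand pieces
  have D1 : IntervalIntegrable (fun r => (deriv f r) ^ 2 * r ^ 3) volume 0 ε ∧
      (∫ r in (0:ℝ)..ε, (deriv f r) ^ 2 * r ^ 3) = ∫ x in (0:ℝ)..ε, (0:ℝ) := by
    refine hardy_piece hε intervalIntegrable_const ?_
    intro x hx
    have hev : f =ᶠ[nhds x] (fun _ => 1/ε) := by
      filter_upwards [isOpen_Iio.mem_nhds hx.2] with y hy
      rw [hf y, if_pos (le_of_lt hy)]
    rw [hev.deriv_eq, deriv_const]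
    ring
  have D2 : IntervalIntegrable (fun r => (deriv f r) ^ 2 * r ^ 3) volume ε (1/2) ∧
      (∫ r in ε..(1/2:ℝ), (deriv f r) ^ 2 * r ^ 3) = ∫ x in ε..(1/2:ℝ), 1/x := by
    refine hardy_piece hε2 ?_ ?_
    · refine ContinuousOn.intervalIntegrable ?_
      apply ContinuousOn.div continuousOn_const continuousOn_id
      intro x hx
      rw [Set.uIcc_of_le hε2.le] at hx
      exact ne_of_gt (lt_of_lt_of_le hε hx.1)
    · intro x hx
      have hev : f =ᶠ[nhds x] (fun y => y⁻¹) := by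
        filter_upwards [isOpen_Ioo.mem_nhds hx] with y hy
        rw [hf y, if_neg (not_le.2 hy.1), if_pos hy.2.le, one_div]
      rw [hev.deriv_eq, deriv_inv]
      have hx0 : x ≠ 0 := ne_of_gt (hε.trans hx.1)
      field_simp
  have D3 : IntervalIntegrable (fun r => (deriv f r) ^ 2 * r ^ 3) volume (1/2) 1 ∧
      (∫ r in (1/2:ℝ)..1, (deriv f r) ^ 2 * r ^ 3) = ∫ x in (1/2:ℝ)..1, 16*x^3 := by
    refine hardy_piece (by norm_num) (by apply Continuous.intervalIntegrable; fun_prop) ?_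
    intro x hx
    have hev : f =ᶠ[nhds x] (fun y => 4*(1-y)) := by
      filter_upwards [isOpen_Ioi.mem_nhds hx.1] with y hy
      rw [hf y, if_neg (not_le.2 (h4.trans (by linarith [mem_Ioi.1 hy]))),
        if_neg (not_le.2 (mem_Ioi.1 hy))]
    have hder : HasDerivAt (fun y : ℝ => 4*(1-y)) (-4) x := by
      have h := ((hasDerivAt_const x (1:ℝ)).sub (hasDerivAt_id x)).const_mul 4
      refine h.congr_deriv ?_
      norm_num
    rw [hev.deriv_eq, hder.deriv]
    ring
  -- evaluate the nice integrals
  have e1 : (∫ x in (0:ℝ)..ε, x / ε^2) = 1/2 := by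
    rw [intervalIntegral.integral_div, integral_id]
    field_simp
    ring
  have e2 : (∫ x in ε..(1/2:ℝ), 1/x) = Real.log (1/2) - Real.log ε := by
    rw [integral_one_div_of_pos hε (by norm_num), Real.log_div (by norm_num) hε.ne']
  have e3 : (∫ x in (1/2:ℝ)..1, 16*(1-x)^2*x) = 5/12 := by
    have hd : ∀ x ∈ Set.uIcc (1/2:ℝ) 1,
        HasDerivAt (fun y => 8*y^2 - (32/3)*y^3 + 4*y^4) (16*(1-x)^2*x) x := by
      intro x _
      have h := (((hasDerivAt_pow 2 x).const_mul 8).sub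
        ((hasDerivAt_pow 3 x).const_mul (32/3))).add ((hasDerivAt_pow 4 x).const_mul 4)
      refine h.congr_deriv ?_
      ring
    rw [intervalIntegral.integral_eq_sub_of_hasDerivAt hd
      (by apply Continuous.intervalIntegrable; fun_prop)]
    norm_num
  have e4 : (∫ x in (1/2:ℝ)..1, 16*x^3) = 15/4 := by
    have hd : ∀ x ∈ Set.uIcc (1/2:ℝ) 1, HasDerivAt (fun y => 4*y^4) (16*x^3) x := by
      intro x _
      have h := (hasDerivAt_pow 4 x).const_mul 4
      refine h.congr_deriv ?_
      ring
    rw [intervalIntegral.integral_eq_sub_of_hasDerivAt hd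
      (by apply Continuous.intervalIntegrable; fun_prop)]
    norm_num
  have e0 : (∫ x in (0:ℝ)..ε, (0:ℝ)) = 0 := by simp
  -- assemble
  have splitA : (∫ r in (0:ℝ)..1, (f r / r) ^ 2 * r ^ 3)
      = (∫ r in (0:ℝ)..ε, (f r / r) ^ 2 * r ^ 3) + (∫ r in ε..(1/2:ℝ), (f r / r) ^ 2 * r ^ 3)
        + (∫ r in (1/2:ℝ)..1, (f r / r) ^ 2 * r ^ 3) := by
    rw [intervalIntegral.integral_add_adjacent_intervals A1.1 A2.1,
      intervalIntegral.integral_add_adjacent_intervals (A1.1.trans A2.1) A3.1]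
  have splitD : (∫ r in (0:ℝ)..1, (deriv f r) ^ 2 * r ^ 3)
      = (∫ r in (0:ℝ)..ε, (deriv f r) ^ 2 * r ^ 3) + (∫ r in ε..(1/2:ℝ), (deriv f r) ^ 2 * r ^ 3)
        + (∫ r in (1/2:ℝ)..1, (deriv f r) ^ 2 * r ^ 3) := by
    rw [intervalIntegral.integral_add_adjacent_intervals D1.1 D2.1,
      intervalIntegral.integral_add_adjacent_intervals (D1.1.trans D2.1) D3.1]
  set L : ℝ := -Real.log ε with hL
  have hlogε : Real.log ε < 0 := Real.log_neg hε (by linarith)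
  have habs : |Real.log ε| = L := abs_of_neg hlogε
  have hlog2 : Real.log (1/2) = -Real.log 2 := by
    rw [one_div, Real.log_inv]
  have hAval : (∫ r in (0:ℝ)..1, (f r / r) ^ 2 * r ^ 3) = L - Real.log 2 + 11/12 := by
    rw [splitA, A1.2, A2.2, A3.2, e1, e2, e3, hlog2]; ring
  have hDval : (∫ r in (0:ℝ)..1, (deriv f r) ^ 2 * r ^ 3) = L - Real.log 2 + 15/4 := by
    rw [splitD, D1.2, D2.2, D3.2, e0, e2, e4, hlog2]; ring
  have hl2 : Real.log 2 < 0.6931471808 := Real.log_two_lt_d9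
  have hl2' : (0.6931471803:ℝ) < Real.log 2 := Real.log_two_gt_d9
  have hLlb : 2 * Real.log 2 < L := by
    have : Real.log ε < Real.log (1/4) := Real.log_lt_log hε h4
    rw [show (1/4:ℝ) = (1/2)^2 by norm_num, Real.log_pow, hlog2] at this
    push_cast at this
    simp only [hL]
    linarith
  have hLpos : 0 < L := by linarith
  rw [hAval, hDval, habs]
  constructor
  · linarith
  · have key : (17:ℝ)/6 ≤ 3 * (L - Real.log 2 + 11/12) / L := by
      rw [le_div_iff₀ hLpos]
      nlinarith
    have expand : (1 + 3 / L) * (L - Real.log 2 + 11/12)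
        = (L - Real.log 2 + 11/12) + 3 * (L - Real.log 2 + 11/12) / L := by
      field_simp
    rw [expand]
    linarith
end

section
/- (Hardy inequality with best constant) For d > 2 and any smooth compactly supported function f : (0,∞) → ℝ, ∫₀^∞ |f(r)/r|² r^{d-1} dr ≤ (4/(d-2)²) ∫₀^∞ |f'(r)|² r^{d-1} dr. -/
open MeasureTheory Set Function intervalIntegral

theorem hardy_inequality_best_constant (d : ℝ) (hd : 2 < d)
    (f : ℝ → ℝ) (hf : ContDiff ℝ 1 f) (hsupp : HasCompactSupport f)
    (hsupp' : tsupport f ⊆ Set.Ioi 0) :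
    (∫ r in Set.Ioi (0 : ℝ), (f r / r) ^ 2 * r ^ (d - 1))
      ≤ (4 / (d - 2) ^ 2) * ∫ r in Set.Ioi (0 : ℝ), (deriv f r) ^ 2 * r ^ (d - 1) := by
  have hd2 : (0:ℝ) < d - 2 := by linarith
  have hfc : Continuous f := hf.continuous
  have hfd : Differentiable ℝ f := hf.differentiable (by norm_num)
  have hf'c : Continuous (deriv f) := hf.continuous_deriv le_rfl
  by_cases hK : tsupport f = ∅
  · have hf0 : ∀ x, f x = 0 := fun x =>
      image_eq_zero_of_notMem_tsupport (by simp [hK])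
    have hf'0 : ∀ x, deriv f x = 0 := by
      intro x
      by_contra h
      have : x ∈ tsupport f := support_deriv_subset (by simpa using h)
      simp [hK] at this
    simp [hf0, hf'0]
  · -- setup of support bounds
    have hne : (tsupport f).Nonempty := nonempty_iff_ne_empty.mpr hK
    set a₀ := sInf (tsupport f) with ha₀def
    set b₀ := sSup (tsupport f) with hb₀def
    have ha₀K : a₀ ∈ tsupport f := hsupp.isCompact.sInf_mem hne
    have hb₀K : b₀ ∈ tsupport f := hsupp.isCompact.sSup_mem hne
    have ha₀ : 0 < a₀ := hsupp' ha₀K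
    set a := a₀ / 2 with hadef
    set b := b₀ + 1 with hbdef
    have ha : 0 < a := by positivity
    have hab : a < b := by
      have : a₀ ≤ b₀ := csInf_le_csSup hne hsupp.isCompact.bddBelow hsupp.isCompact.bddAbove
      simp only [hadef, hbdef]; linarith
    have haleb : a ≤ b := hab.le
    have hfz : ∀ r, r ∉ Set.Ioo a b → f r = 0 := by
      intro r hr
      apply image_eq_zero_of_notMem_tsupport
      intro hrK
      exact hr ⟨lt_of_lt_of_le (by simp [hadef]; linarith) (csInf_le hsupp.isCompact.bddBelow hrK),
        lt_of_le_of_lt (le_csSup hsupp.isCompact.bddAbove hrK) (by simp [hbdef]; linarith)⟩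
    have hf'z : ∀ r, r ∉ Set.Ioo a b → deriv f r = 0 := by
      intro r hr
      by_contra h
      have hrK : r ∈ tsupport f := support_deriv_subset (by simpa using h)
      exact hr ⟨lt_of_lt_of_le (by simp [hadef]; linarith) (csInf_le hsupp.isCompact.bddBelow hrK),
        lt_of_le_of_lt (le_csSup hsupp.isCompact.bddAbove hrK) (by simp [hbdef]; linarith)⟩
    have hpos : ∀ r ∈ Set.uIcc a b, 0 < r := by
      intro r hr
      rw [Set.uIcc_of_le haleb] at hr
      exact lt_of_lt_of_le ha hr.1
    -- continuity of rpow on uIcc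
    have hrpowc : ∀ p : ℝ, ContinuousOn (fun r : ℝ => r ^ p) (Set.uIcc a b) := by
      intro p r hr
      exact (Real.continuousAt_rpow_const r p (Or.inl (hpos r hr).ne')).continuousWithinAt
    -- reduce set integrals to interval integrals
    have hconv : ∀ g : ℝ → ℝ, (∀ r, r ∉ Set.Ioo a b → g r = 0) →
        (∫ r in Set.Ioi (0:ℝ), g r) = ∫ r in a..b, g r := by
      intro g hg
      have h1 : (∫ r in Set.Ioi (0:ℝ), g r) = ∫ r, g r :=
        setIntegral_eq_integral_of_forall_compl_eq_zero
          (fun x hx => hg x (fun hx' => hx (lt_trans ha hx'.1)))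
      rw [h1]
      exact (intervalIntegral.integral_eq_integral_of_support_subset
        (fun x hx => Set.Ioo_subset_Ioc_self (by
          by_contra h; exact hx (hg x h)))).symm
    have hL : (∫ r in Set.Ioi (0:ℝ), (f r / r) ^ 2 * r ^ (d - 1))
        = ∫ r in a..b, f r ^ 2 * r ^ (d - 3) := by
      rw [hconv _ (fun r hr => by simp [hfz r hr])]
      apply intervalIntegral.integral_congr
      intro r hr
      have hr0 : 0 < r := hpos r hr
      show (f r / r) ^ 2 * r ^ (d - 1) = f r ^ 2 * r ^ (d - 3)
      have h2 : (r:ℝ) ^ (2:ℕ) = r ^ ((2:ℝ)) := by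
        rw [← Real.rpow_natCast r 2]; norm_num
      rw [div_pow, h2, div_mul_eq_mul_div, div_eq_iff (by positivity), mul_assoc,
        ← Real.rpow_add hr0]
      rw [show d - 3 + (2:ℝ) = d - 1 by ring]
    have hR : (∫ r in Set.Ioi (0:ℝ), (deriv f r) ^ 2 * r ^ (d - 1))
        = ∫ r in a..b, (deriv f r) ^ 2 * r ^ (d - 1) := by
      exact hconv _ (fun r hr => by simp [hf'z r hr])
    rw [hL, hR]
    set A := ∫ r in a..b, f r ^ 2 * r ^ (d - 3) with hA
    set B := ∫ r in a..b, (deriv f r) ^ 2 * r ^ (d - 1) with hB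
    set I1 := ∫ r in a..b, f r * deriv f r * r ^ (d - 2) with hI1
    -- integrability
    have hint1 : IntervalIntegrable (fun r => f r ^ 2 * r ^ (d - 3)) volume a b :=
      (((hfc.pow 2).continuousOn).mul (hrpowc _)).intervalIntegrable
    have hint2 : IntervalIntegrable (fun r => (deriv f r) ^ 2 * r ^ (d - 1)) volume a b :=
      (((hf'c.pow 2).continuousOn).mul (hrpowc _)).intervalIntegrable
    have hint3 : IntervalIntegrable (fun r => f r * deriv f r * r ^ (d - 2)) volume a b :=
      (((hfc.mul hf'c).continuousOn).mul (hrpowc _)).intervalIntegrable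
    -- integration by parts
    have hIBP : (2 / (d - 2)) * I1 + A = 0 := by
      have hderiv : ∀ r ∈ Set.uIcc a b,
          HasDerivAt (fun r => f r ^ 2 * r ^ (d - 2) / (d - 2))
            ((2 / (d - 2)) * (f r * deriv f r * r ^ (d - 2)) + f r ^ 2 * r ^ (d - 3)) r := by
        intro r hr
        have hr0 : 0 < r := hpos r hr
        have h1 : HasDerivAt (fun x => f x ^ 2) (2 * f r * deriv f r) r := by
          have := ((hfd r).hasDerivAt).fun_pow 2
          simpa [mul_comm, mul_assoc, mul_left_comm] using this
        have h2 : HasDerivAt (fun x : ℝ => x ^ (d - 2)) ((d - 2) * r ^ (d - 2 - 1)) r :=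
          Real.hasDerivAt_rpow_const (Or.inl hr0.ne')
        have h3 := (h1.mul h2).div_const (d - 2)
        have he : d - 2 - 1 = d - 3 := by ring
        rw [he] at h3
        refine h3.congr_deriv ?_
        field_simp
      have := intervalIntegral.integral_eq_sub_of_hasDerivAt hderiv
        (((intervalIntegrable_const (c := 2 / (d-2))).mul_continuousOn
          (by exact ((hfc.mul hf'c).continuousOn).mul (hrpowc _)) ).add hint1)
      rw [intervalIntegral.integral_add ((hint3.const_mul _)) hint1,
        intervalIntegral.integral_const_mul] at this
      rw [hI1, hA]
      rw [this]
      have hfa : f a = 0 := hfz a (by simp [hab])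
      have hfb : f b = 0 := hfz b (by simp)
      simp [hfa, hfb]
    -- pointwise AM-GM and monotonicity
    have hmono : (-2) * I1 ≤ (d - 2) / 2 * A + 2 / (d - 2) * B := by
      have := intervalIntegral.integral_mono_on haleb (hint3.const_mul (-2))
        ((hint1.const_mul ((d-2)/2)).add (hint2.const_mul (2/(d-2))))
        (fun r hr => by
          have hr0 : 0 < r := hpos r (by rw [Set.uIcc_of_le haleb]; exact hr)
          have e1 : r ^ (d - 3) = r ^ ((d - 3)/2) * r ^ ((d - 3)/2) := by
            rw [← Real.rpow_add hr0]; ring_nf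
          have e2 : r ^ (d - 1) = r ^ ((d - 1)/2) * r ^ ((d - 1)/2) := by
            rw [← Real.rpow_add hr0]; ring_nf
          have e3 : r ^ (d - 2) = r ^ ((d - 3)/2) * r ^ ((d - 1)/2) := by
            rw [← Real.rpow_add hr0]; ring_nf
          set u := f r * r ^ ((d - 3)/2) with hu
          set v := deriv f r * r ^ ((d - 1)/2) with hv
          have goal_eq1 : (-2) * (f r * deriv f r * r ^ (d - 2)) = -2 * (u * v) := by
            rw [e3, hu, hv]; ring
          have goal_eq2 : (d - 2)/2 * (f r ^ 2 * r ^ (d - 3)) + 2/(d - 2) * ((deriv f r) ^ 2 * r ^ (d - 1))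
              = (d - 2)/2 * u ^ 2 + 2/(d - 2) * v ^ 2 := by
            rw [e1, e2, hu, hv]; ring
          rw [goal_eq1, goal_eq2, ← sub_nonneg]
          have heq : (d-2)/2*u^2 + 2/(d-2)*v^2 - (-2*(u*v)) = ((d-2)*u + 2*v)^2 / (2*(d-2)) := by
            field_simp; ring
          rw [heq]; positivity)
      rw [intervalIntegral.integral_const_mul, intervalIntegral.integral_add
        (hint1.const_mul _) (hint2.const_mul _), intervalIntegral.integral_const_mul,
        intervalIntegral.integral_const_mul] at this
      exact this
    -- finish arithmetic
    have hd2' : d - 2 ≠ 0 := hd2.ne'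
    rw [div_mul_eq_mul_div, le_div_iff₀ (by positivity)]
    have e1 : I1 = -((d - 2)/2) * A := by
      field_simp at hIBP
      field_simp
      linarith
    rw [e1] at hmono
    have h4 : (d - 2) * ((d - 2)/2 * A) ≤ (d - 2) * (2/(d - 2) * B) := by
      have h5 : (d - 2)/2 * A ≤ 2/(d - 2) * B := by linarith
      exact mul_le_mul_of_nonneg_left h5 hd2.le
    rw [← mul_assoc, ← mul_assoc, mul_div_cancel₀ _ hd2'] at h4
    nlinarith [h4]
end

section
/- Let n ≥ 2 and suppose φ : [0,R] → ℝ is a C² solution of φ''(r) + ((2n-1)/r + r/2)·φ'(r) - η(φ(r))/r² = 0 with φ(0) = 0, φ'(0) = β > 0, where η(x) = (2n-2)sin(x) + sin(2x)/2, and φ extends C¹ to 0. If φ(r) < π for all r ∈ [0,R], then φ is strictly increasing on [0,R]. -/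
open Set Filter Topology

theorem self_similar_increasing (n : ℤ) (hn : 2 ≤ n) (R β : ℝ) (hR : 0 < R)
    (hβ : 0 < β)
    (η φ : ℝ → ℝ)
    (hη : ∀ x, η x = (2 * (n : ℝ) - 2) * Real.sin x + Real.sin (2 * x) / 2)
    (hφC1 : ContDiffOn ℝ 1 φ (Set.Icc 0 R))
    (hφC2 : ContDiffOn ℝ 2 φ (Set.Ioc 0 R))
    (hode : ∀ r ∈ Set.Ioc (0 : ℝ) R,
      deriv (deriv φ) r + ((2 * (n : ℝ) - 1) / r + r / 2) * deriv φ r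
        - η (φ r) / r ^ 2 = 0)
    (h0 : φ 0 = 0) (h0' : deriv φ 0 = β)
    (hlt : ∀ r ∈ Set.Icc (0 : ℝ) R, φ r < Real.pi) :
    StrictMonoOn φ (Set.Icc 0 R) := by
  have hn' : (2:ℝ) ≤ (n:ℝ) := by exact_mod_cast hn
  have hηpos : ∀ x, 0 < x → x < Real.pi → 0 < η x := by
    intro x hx hxπ
    have hs : 0 < Real.sin x := Real.sin_pos_of_pos_of_lt_pi hx hxπ
    have hc : -1 ≤ Real.cos x := Real.neg_one_le_cos x
    rw [hη, Real.sin_two_mul]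
    nlinarith
  have hud : UniqueDiffOn ℝ (Icc (0:ℝ) R) := uniqueDiffOn_Icc hR
  set g : ℝ → ℝ := derivWithin φ (Icc 0 R) with hgdef
  have hgcont : ContinuousOn g (Icc 0 R) := hφC1.continuousOn_derivWithin hud le_rfl
  have hdiff0 : DifferentiableAt ℝ φ 0 := by
    by_contra h
    rw [deriv_zero_of_not_differentiableAt h] at h0'
    linarith
  have h0mem : (0:ℝ) ∈ Icc (0:ℝ) R := ⟨le_rfl, hR.le⟩
  have hg0 : g 0 = β := by
    rw [hgdef, hdiff0.derivWithin (hud 0 h0mem), h0']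
  have hgeq : ∀ r ∈ Ioo (0:ℝ) R, g r = deriv φ r := by
    intro r hr
    have hnh : Icc (0:ℝ) R ∈ 𝓝 r := Icc_mem_nhds hr.1 hr.2
    exact ((hφC1.differentiableOn one_ne_zero r (Ioo_subset_Icc_self hr)).differentiableAt
      hnh).derivWithin (hud r (Ioo_subset_Icc_self hr))
  have key : ∀ x ∈ Ioo (0:ℝ) R, 0 < deriv φ x := by
    by_contra hcon
    push_neg at hcon
    obtain ⟨x, hx, hx0⟩ := hcon
    set S : Set ℝ := Icc 0 R ∩ g ⁻¹' (Iic 0) with hSdef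
    have hxS : x ∈ S := by
      refine ⟨Ioo_subset_Icc_self hx, ?_⟩
      simp only [mem_preimage, mem_Iic]
      rw [hgeq x hx]; exact hx0
    have hSne : S.Nonempty := ⟨x, hxS⟩
    have hSclosed : IsClosed S :=
      hgcont.preimage_isClosed_of_isClosed isClosed_Icc isClosed_Iic
    have hSbdd : BddBelow S := ⟨0, fun r hr => hr.1.1⟩
    set r₀ : ℝ := sInf S with hr₀def
    have hr₀S : r₀ ∈ S := hSclosed.csInf_mem hSne hSbdd
    have hr₀Icc : r₀ ∈ Icc (0:ℝ) R := hr₀S.1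
    have hgr₀ : g r₀ ≤ 0 := hr₀S.2
    have hr₀pos : 0 < r₀ := by
      rcases lt_or_eq_of_le hr₀Icc.1 with h | h
      · exact h
      · exfalso; rw [← h, hg0] at hgr₀; linarith
    have hr₀ltR : r₀ < R := lt_of_le_of_lt (csInf_le hSbdd hxS) hx.2
    have hgpos : ∀ r ∈ Ico (0:ℝ) r₀, 0 < g r := by
      intro r hr
      by_contra h
      push_neg at h
      have : r ∈ S := ⟨⟨hr.1, le_trans hr.2.le hr₀Icc.2⟩, h⟩
      exact absurd (csInf_le hSbdd this) (not_le.mpr hr.2)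
    -- φ r₀ > 0
    have hmono : StrictMonoOn φ (Icc 0 r₀) := by
      apply strictMonoOn_of_deriv_pos (convex_Icc 0 r₀)
        (hφC1.continuousOn.mono (Icc_subset_Icc le_rfl hr₀Icc.2))
      intro y hy
      rw [interior_Icc] at hy
      have hy' : y ∈ Ioo (0:ℝ) R := ⟨hy.1, lt_of_lt_of_le hy.2 hr₀Icc.2⟩
      rw [← hgeq y hy']
      exact hgpos y ⟨hy.1.le, hy.2⟩
    have hφr₀pos : 0 < φ r₀ := by
      have := hmono (left_mem_Icc.mpr hr₀pos.le) (right_mem_Icc.mpr hr₀pos.le) hr₀pos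
      rwa [h0] at this
    have hφr₀lt : φ r₀ < Real.pi := hlt r₀ hr₀Icc
    have hηr₀ : 0 < η (φ r₀) := hηpos _ hφr₀pos hφr₀lt
    -- second derivative at r₀ is positive
    have hr₀Ioo : r₀ ∈ Ioo (0:ℝ) R := ⟨hr₀pos, hr₀ltR⟩
    have hdφr₀ : deriv φ r₀ = g r₀ := (hgeq r₀ hr₀Ioo).symm
    have hodeat := hode r₀ ⟨hr₀pos, hr₀ltR.le⟩
    have hcoef : 0 < (2 * (n : ℝ) - 1) / r₀ + r₀ / 2 := by
      have h1 : 0 < (2 * (n : ℝ) - 1) := by linarith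
      positivity
    have hApos : 0 < deriv (deriv φ) r₀ := by
      have h1 : 0 < η (φ r₀) / r₀ ^ 2 := by positivity
      have h2 : ((2 * (n : ℝ) - 1) / r₀ + r₀ / 2) * deriv φ r₀ ≤ 0 := by
        rw [hdφr₀]
        exact mul_nonpos_of_nonneg_of_nonpos hcoef.le hgr₀
      linarith
    -- deriv φ has derivative deriv (deriv φ) r₀ at r₀
    have hC2' : ContDiffOn ℝ 2 φ (Ioo 0 R) := hφC2.mono Ioo_subset_Ioc_self
    have hderivC1 : ContDiffOn ℝ 1 (deriv φ) (Ioo 0 R) := by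
      have := hC2'.deriv_of_isOpen isOpen_Ioo (m := 1) (by norm_num)
      exact this
    have hDA : DifferentiableAt ℝ (deriv φ) r₀ :=
      (hderivC1.differentiableOn one_ne_zero r₀ hr₀Ioo).differentiableAt
        (isOpen_Ioo.mem_nhds hr₀Ioo)
    have hHD : HasDerivAt (deriv φ) (deriv (deriv φ) r₀) r₀ := hDA.hasDerivAt
    -- slope argument from the left
    have hslope : Tendsto (slope (deriv φ) r₀) (𝓝[<] r₀) (𝓝 (deriv (deriv φ) r₀)) :=
      (hasDerivAt_iff_tendsto_slope.mp hHD).mono_left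
        (nhdsWithin_mono r₀ (fun y hy => ne_of_lt hy))
    have hev1 : ∀ᶠ r in 𝓝[<] r₀, 0 < slope (deriv φ) r₀ r :=
      hslope.eventually (eventually_gt_nhds hApos)
    have hev2 : ∀ᶠ r in 𝓝[<] r₀, r ∈ Ioo 0 r₀ :=
      Ioo_mem_nhdsLT_of_mem ⟨hr₀pos, le_rfl⟩
    obtain ⟨r, hr1, hr2⟩ := (hev1.and hev2).exists
    have hrg : 0 < g r := hgpos r ⟨hr2.1.le, hr2.2⟩
    have hrIoo : r ∈ Ioo (0:ℝ) R := ⟨hr2.1, lt_trans hr2.2 hr₀ltR⟩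
    have hrd : deriv φ r = g r := (hgeq r hrIoo).symm
    have hsl : slope (deriv φ) r₀ r = (deriv φ r - deriv φ r₀) / (r - r₀) := by
      rw [slope_def_field]
    rw [hsl] at hr1
    have hden : r - r₀ < 0 := by linarith [hr2.2]
    have hnum : deriv φ r - deriv φ r₀ < 0 := by
      by_contra h
      push_neg at h
      have := div_nonpos_of_nonneg_of_nonpos h hden.le
      linarith
    rw [hrd, hdφr₀] at hnum
    linarith
  exact strictMonoOn_of_deriv_pos (convex_Icc 0 R) hφC1.continuousOn
    (by rw [interior_Icc]; exact key)
end

section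
/- Let n ≥ 3 and let φ_α, φ_β : [0,∞) → ℝ be solutions of the self-similar ODE φ'' + ((2n-1)/r + r/2)φ' - η(φ)/r² = 0 with φ(0) = 0 and φ'(0) = α, β respectively, 0 < α < β, where η(x) = (2n-2)sin(x) + sin(2x)/2, and both solutions are bounded above by π. Assume g(r) = r²(φ_β(r) - φ_α(r)) is C² and initially strictly increasing. If r₀ > 0 is a point with g'(r₀) = 0 and g(r₀) > 0 and g increasing on (0,r₀), then g''(r₀) > 0; consequently g has no interior local maximum and φ_β(r) > φ_α(r) for all r > 0. -/
open Real Set Filter Topology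

/-- two zeros of sin within distance < π are equal -/
lemma aux_sin_eq {x y : ℝ} (hx : Real.sin x = 0) (hy : Real.sin y = 0)
    (h : |x - y| < Real.pi) : x = y := by
  obtain ⟨k, hk⟩ := Real.sin_eq_zero_iff.mp hx
  obtain ⟨m, hm⟩ := Real.sin_eq_zero_iff.mp hy
  subst hk; subst hm
  by_contra hne
  have hkm : k ≠ m := by rintro rfl; exact hne rfl
  have h1 : (1 : ℤ) ≤ |k - m| := Int.one_le_abs (sub_ne_zero.mpr hkm)
  have h2 : (1 : ℝ) ≤ |(k : ℝ) - (m : ℝ)| := by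
    have := (Int.cast_le (R := ℝ)).mpr h1
    push_cast at this
    simpa [abs_sub_comm] using this
  have h3 : |(k:ℝ) * π - (m:ℝ) * π| = |(k:ℝ) - m| * π := by
    rw [← sub_mul, abs_mul, abs_of_pos Real.pi_pos]
  nlinarith [Real.pi_pos]

/-- one-sided Lipschitz bound for η -/
lemma aux_eta_lip {c : ℝ} (hc : 3 ≤ c) {x y : ℝ} (hxy : x ≤ y) :
    -((2*c - 3) * (y - x)) ≤
      ((2*c - 2) * Real.sin y + Real.sin (2*y) / 2)
        - ((2*c - 2) * Real.sin x + Real.sin (2*x) / 2) := by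
  set F : ℝ → ℝ := fun t => (2*c - 2) * Real.sin t + Real.sin (2*t) / 2 + (2*c - 3) * t with hF
  have hder : ∀ t : ℝ, HasDerivAt F ((2*c - 2) * Real.cos t + Real.cos (2*t) + (2*c - 3)) t := by
    intro t
    have h1 : HasDerivAt (fun t : ℝ => Real.sin (2*t)) (Real.cos (2*t) * 2) t := by
      have := (Real.hasDerivAt_sin (2*t)).comp t ((hasDerivAt_id t).const_mul 2)
      simpa [Function.comp_def] using this
    have h2 : HasDerivAt (fun t : ℝ => (2*c-2) * Real.sin t) ((2*c-2) * Real.cos t) t :=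
      (Real.hasDerivAt_sin t).const_mul _
    have h3 : HasDerivAt (fun t : ℝ => (2*c-3) * t) (2*c-3) t := by
      simpa using (hasDerivAt_id t).const_mul (2*c-3)
    have := (h2.fun_add (h1.div_const 2)).fun_add h3
    convert this using 1
    case e'_9 => ring
    all_goals rfl
  have hmono : Monotone F := by
    apply monotone_of_deriv_nonneg
    · exact fun t => (hder t).differentiableAt
    · intro t
      rw [(hder t).deriv]
      have h4 := Real.neg_one_le_cos t
      have h5 := Real.cos_le_one t
      have h6 : Real.cos (2*t) = 2 * Real.cos t ^ 2 - 1 := Real.cos_two_mul t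
      nlinarith [sq_nonneg (Real.cos t + 1)]
  have := hmono hxy
  simp only [hF] at this
  linarith

/-- zeros of η are zeros of sin -/
lemma aux_eta_zero {c : ℝ} (hc : 3 ≤ c) {x : ℝ}
    (h : (2*c - 2) * Real.sin x + Real.sin (2*x) / 2 = 0) : Real.sin x = 0 := by
  have h2 : Real.sin (2*x) = 2 * Real.sin x * Real.cos x := Real.sin_two_mul x
  have hfac : Real.sin x * ((2*c - 2) + Real.cos x) = 0 := by
    rw [h2] at h; nlinarith [h]
  rcases mul_eq_zero.mp hfac with h' | h'
  · exact h'
  · nlinarith [Real.neg_one_le_cos x]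

/-- continuous at r, constant value on a dense-near-r set: value at r -/
lemma aux_val_eq {f : ℝ → ℝ} {S : Set ℝ} {r v : ℝ}
    (hne : (𝓝[S \ {r}] r).NeBot) (hc : ContinuousAt f r)
    (hS : ∀ s ∈ S, f s = v) : f r = v := by
  have h1 : Tendsto f (𝓝[S \ {r}] r) (𝓝 (f r)) := hc.tendsto.mono_left nhdsWithin_le_nhds
  have h2 : Tendsto f (𝓝[S \ {r}] r) (𝓝 v) := by
    apply Tendsto.congr' _ tendsto_const_nhds
    filter_upwards [self_mem_nhdsWithin] with s hs
    exact (hS s hs.1).symm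
  exact tendsto_nhds_unique h1 h2

/-- derivative zero if function is eventually (within a dense set) equal to its value -/
lemma aux_deriv_zero {f : ℝ → ℝ} {S : Set ℝ} {r L : ℝ}
    (hL : HasDerivAt f L r) (hne : (𝓝[S \ {r}] r).NeBot)
    (hev : ∀ᶠ s in 𝓝[S \ {r}] r, f s = f r) : L = 0 := by
  have h1 : Tendsto (slope f r) (𝓝[S \ {r}] r) (𝓝 L) :=
    (hasDerivAt_iff_tendsto_slope.mp hL).mono_left
      (nhdsWithin_mono _ (fun s hs => hs.2))
  have h2 : Tendsto (slope f r) (𝓝[S \ {r}] r) (𝓝 0) := by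
    apply Tendsto.congr' _ tendsto_const_nhds
    filter_upwards [hev] with s hs
    simp [slope, hs]
  exact tendsto_nhds_unique h1 h2

/-- a set dense in an interval gives a NeBot punctured within-filter -/
lemma aux_neBot {S : Set ℝ} {c d r : ℝ} (hr : r ∈ Ioo c d)
    (hd : ∀ x y, c ≤ x → x < y → y ≤ d → ∃ s, s ∈ Ioo x y ∧ s ∈ S) :
    (𝓝[S \ {r}] r).NeBot := by
  rw [← mem_closure_iff_nhdsWithin_neBot]
  rw [Metric.mem_closure_iff]
  intro ε hε
  obtain ⟨s, hs1, hs2⟩ := hd r (min d (r + ε)) (le_of_lt hr.1)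
    (lt_min hr.2 (by linarith)) (min_le_left _ _)
  refine ⟨s, ⟨hs2, ?_⟩, ?_⟩
  · simp only [mem_singleton_iff]
    exact fun h => absurd (h ▸ hs1.1) (lt_irrefl _)
  · have := hs1.2
    have h1 : s < r + ε := lt_of_lt_of_le this (min_le_right _ _)
    rw [Real.dist_eq, abs_sub_lt_iff]
    constructor <;> [linarith [hs1.1]; linarith]

/-- nonneg derivative from strict monotonicity on an open interval -/
lemma aux_deriv_nonneg {f : ℝ → ℝ} {a b r : ℝ} (hm : StrictMonoOn f (Ioo a b))
    (hf : DifferentiableAt ℝ f r) (hr : r ∈ Ioo a b) : 0 ≤ deriv f r := by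
  have h1 : Tendsto (slope f r) (𝓝[>] r) (𝓝 (deriv f r)) :=
    (hasDerivAt_iff_tendsto_slope.mp hf.hasDerivAt).mono_left
      (nhdsWithin_mono _ (fun s hs => ne_of_gt hs))
  refine ge_of_tendsto h1 ?_
  filter_upwards [self_mem_nhdsWithin,
    eventually_nhdsWithin_of_eventually_nhds (eventually_lt_nhds hr.2)] with s hs1 hs2
  have hsmem : s ∈ Ioo a b := ⟨lt_trans hr.1 hs1, hs2⟩
  have := hm hr hsmem hs1
  have hpos : 0 < s - r := by simp only [mem_Ioi] at hs1; linarith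
  rw [slope_def_field]
  have hlt : f r < f s := hm hr hsmem hs1
  exact div_nonneg (by linarith) (by linarith)

set_option maxHeartbeats 4000000 in
theorem self_similar_monotone_in_beta (n : ℤ) (hn : 3 ≤ n)
    (α β : ℝ) (hα : 0 < α) (hαβ : α < β)
    (η φa φb : ℝ → ℝ)
    (hη : ∀ x, η x = (2 * (n : ℝ) - 2) * Real.sin x + Real.sin (2 * x) / 2)
    (hodea : ∀ r > (0 : ℝ),
      deriv (deriv φa) r + ((2 * (n : ℝ) - 1) / r + r / 2) * deriv φa r
        - η (φa r) / r ^ 2 = 0)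
    (hodeb : ∀ r > (0 : ℝ),
      deriv (deriv φb) r + ((2 * (n : ℝ) - 1) / r + r / 2) * deriv φb r
        - η (φb r) / r ^ 2 = 0)
    (h0a : φa 0 = 0) (h0b : φb 0 = 0)
    (h0a' : deriv φa 0 = α) (h0b' : deriv φb 0 = β)
    (hba : ∀ r ≥ (0 : ℝ), φa r ≤ Real.pi) (hbb : ∀ r ≥ (0 : ℝ), φb r ≤ Real.pi)
    (g : ℝ → ℝ) (hg : ∀ r, g r = r ^ 2 * (φb r - φa r))
    (hgC2 : ContDiff ℝ 2 g)
    (hginit : ∃ ε > (0 : ℝ), StrictMonoOn g (Set.Icc 0 ε)) :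
    (∀ r₀ > (0 : ℝ), deriv g r₀ = 0 → 0 < g r₀ → StrictMonoOn g (Set.Ioo 0 r₀) →
        0 < deriv (deriv g) r₀) ∧
    (∀ r > (0 : ℝ), ¬ IsLocalMax g r) ∧
    (∀ r > (0 : ℝ), φa r < φb r) := by
  obtain ⟨ε, hε, hmε⟩ := hginit
  set N : ℝ := (n : ℝ) with hNdef
  have hN3 : (3:ℝ) ≤ N := by rw [hNdef]; exact_mod_cast hn
  -- smoothness facts for g
  have hgdiff : Differentiable ℝ g := hgC2.differentiable (by norm_num)
  have hcontdg : Continuous (deriv g) := hgC2.continuous_deriv (by norm_num)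
  have hgC2' : ContDiff ℝ ((1 + 1 : ℕ) : WithTop ℕ∞) g := by exact_mod_cast hgC2
  have hdg1 : ContDiff ℝ 1 (deriv g) := by
    have := ContDiff.iterate_deriv' 1 1 hgC2'
    simpa using this
  have hdgdiff : Differentiable ℝ (deriv g) := hdg1.differentiable (by norm_num)
  have hddgcont : Continuous (deriv (deriv g)) := hdg1.continuous_deriv (by norm_num)
  -- q = g / r², basic calculus
  set q : ℝ → ℝ := fun r => g r / r ^ 2 with hqdef
  have hphi : ∀ r : ℝ, r ≠ 0 → φb r = φa r + q r := by
    intro r hr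
    have h := hg r
    have hr2 : r ^ 2 ≠ 0 := pow_ne_zero _ hr
    simp only [hqdef]; field_simp
    linarith [h]
  have hqcont : ∀ r : ℝ, r ≠ 0 → ContinuousAt q r := by
    intro r hr
    exact (hgC2.continuous.continuousAt).div ((continuous_pow 2).continuousAt) (pow_ne_zero _ hr)
  have hqder : ∀ r : ℝ, r ≠ 0 →
      HasDerivAt q (deriv g r / r ^ 2 - 2 * g r / r ^ 3) r := by
    intro r hr
    have h := ((hgdiff r).hasDerivAt).fun_div (hasDerivAt_pow 2 r) (pow_ne_zero _ hr)
    convert h using 1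
    case e'_9 => field_simp; ring
    all_goals rfl
  have hqdiff : ∀ r : ℝ, r ≠ 0 → DifferentiableAt ℝ q r :=
    fun r hr => (hqder r hr).differentiableAt
  have hqderiv : ∀ r : ℝ, r ≠ 0 → deriv q r = deriv g r / r ^ 2 - 2 * g r / r ^ 3 :=
    fun r hr => (hqder r hr).deriv
  have hQdiff : ∀ r : ℝ, r ≠ 0 → DifferentiableAt ℝ (deriv q) r := by
    intro r hr
    have h1 : DifferentiableAt ℝ (fun s : ℝ => deriv g s / s ^ 2 - 2 * g s / s ^ 3) r := by
      apply DifferentiableAt.sub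
      · exact (hdgdiff r).div (differentiableAt_pow 2) (pow_ne_zero _ hr)
      · exact ((hgdiff r).const_mul 2).div (differentiableAt_pow 3) (pow_ne_zero _ hr)
    apply h1.congr_of_eventuallyEq
    filter_upwards [compl_singleton_mem_nhds hr] with s hs
    exact hqderiv s hs
  have hQcont : ∀ r : ℝ, r ≠ 0 → ContinuousAt (deriv q) r :=
    fun r hr => (hQdiff r hr).continuousAt
  have hgd1 : ∀ r : ℝ, r ≠ 0 → deriv g r = 2*r*q r + r^2 * deriv q r := by
    intro r hr
    have hev : g =ᶠ[nhds r] fun s => s^2 * q s := by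
      filter_upwards [compl_singleton_mem_nhds hr] with s hs
      have hs0 : s ≠ 0 := hs
      simp only [hqdef]
      field_simp
    rw [hev.deriv_eq, ((hasDerivAt_pow 2 r).fun_mul (hqdiff r hr).hasDerivAt).deriv]
    norm_num
  have hgd2 : ∀ r : ℝ, r ≠ 0 →
      deriv (deriv g) r = 2*q r + 4*r*deriv q r + r^2 * deriv (deriv q) r := by
    intro r hr
    have hev : deriv g =ᶠ[nhds r] fun s => 2*s*q s + s^2 * deriv q s := by
      filter_upwards [compl_singleton_mem_nhds hr] with s hs
      exact hgd1 s hs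
    rw [hev.deriv_eq]
    have h1 : HasDerivAt (fun s : ℝ => 2*s*q s) (2*q r + 2*r*deriv q r) r := by
      have hid : HasDerivAt (fun y : ℝ => 2*y) 2 r := by
        simpa using (hasDerivAt_id r).const_mul (2:ℝ)
      have := hid.fun_mul (hqdiff r hr).hasDerivAt
      convert this using 1
    have h2 : HasDerivAt (fun s : ℝ => s^2 * deriv q s)
        (2*r*deriv q r + r^2 * deriv (deriv q) r) r := by
      have := (hasDerivAt_pow 2 r).fun_mul (hQdiff r hr).hasDerivAt
      convert this using 1
      case e'_9 => norm_num
      all_goals rfl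
    rw [(h1.fun_add h2).deriv]
    ring
  have hiff : ∀ r : ℝ, 0 < r → (DifferentiableAt ℝ φb r ↔ DifferentiableAt ℝ φa r) := by
    intro r hr
    have hev : φb =ᶠ[nhds r] fun s => φa s + q s := by
      filter_upwards [compl_singleton_mem_nhds (ne_of_gt hr)] with s hs
      exact hphi s hs
    rw [hev.differentiableAt_iff]
    constructor
    · intro h
      have := h.fun_sub (hqdiff r (ne_of_gt hr))
      simpa using this
    · intro h
      exact h.add (hqdiff r (ne_of_gt hr))
  have hderivb : ∀ r : ℝ, 0 < r → DifferentiableAt ℝ φa r →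
      deriv φb r = deriv φa r + deriv q r := by
    intro r hr hd
    have hev : φb =ᶠ[nhds r] fun s => φa s + q s := by
      filter_upwards [compl_singleton_mem_nhds (ne_of_gt hr)] with s hs
      exact hphi s hs
    rw [hev.deriv_eq, deriv_fun_add hd (hqdiff r (ne_of_gt hr))]
  -- the main pointwise engine
  have P1 : ∀ r₀ : ℝ, 0 < r₀ → deriv g r₀ = 0 → 0 < g r₀ → StrictMonoOn g (Set.Ioo 0 r₀) →
      0 < deriv (deriv g) r₀ := by
    intro r₀ hr₀ hd0 hgpos hmono
    have hr₀ne : r₀ ≠ 0 := ne_of_gt hr₀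
    set q₀ : ℝ := g r₀ / r₀ ^ 2 with hq₀def
    have hq₀pos : 0 < q₀ := by rw [hq₀def]; positivity
    set M : ℝ := 2*(2*N-5)/r₀ + r₀/2 with hMdef
    have hNn : (1:ℝ) ≤ 2*N - 5 := by linarith
    have hMpos : 0 < M := by
      have h1 : 0 < 2*(2*N-5)/r₀ := div_pos (by linarith) hr₀
      rw [hMdef]
      linarith
    set κ : ℝ := q₀ / (4*M) with hκdef
    have hκpos : 0 < κ := by rw [hκdef]; positivity
    have hMκ : M * κ = q₀ / 4 := by
      rw [hκdef]
      field_simp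
    have hqc : ContinuousAt q r₀ := hqcont r₀ hr₀ne
    have hQc : ContinuousAt (deriv q) r₀ := hQcont r₀ hr₀ne
    have hqval : q r₀ = q₀ := by rw [hq₀def]
    have hQval : deriv q r₀ = -(2*q₀/r₀) := by
      rw [hqderiv r₀ hr₀ne, hd0, hq₀def]
      field_simp
      ring
    have heva : ∀ᶠ s in nhds r₀, q₀/2 < q s :=
      hqc.eventually (eventually_gt_nhds (show q₀/2 < q r₀ by rw [hqval]; linarith))
    have hevb : ∀ᶠ s in nhds r₀, deriv q s < -(q₀/r₀) := by
      apply hQc.eventually (eventually_lt_nhds _)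
      rw [hQval]
      have := div_pos hq₀pos hr₀
      have h2 : 2*q₀/r₀ = 2*(q₀/r₀) := by ring
      rw [h2]
      linarith
    have hevc : ∀ᶠ s in nhds r₀, deriv g s < κ :=
      (hcontdg.continuousAt).eventually
        (eventually_lt_nhds (show deriv g r₀ < κ by rw [hd0]; exact hκpos))
    obtain ⟨δ, hδpos, hδ⟩ := Metric.eventually_nhds_iff.mp ((heva.and hevb).and hevc)
    set a : ℝ := max (r₀/2) (r₀ - δ/2) with hadef
    have har : a < r₀ := by
      rw [hadef]
      exact max_lt (by linarith) (by linarith)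
    have ha2 : r₀/2 ≤ a := by rw [hadef]; exact le_max_left _ _
    have hapos : 0 < a := by linarith
    have hIccd : ∀ r ∈ Set.Icc a r₀, dist r r₀ < δ := by
      intro r hr
      have h1 : r₀ - δ/2 ≤ a := by rw [hadef]; exact le_max_right _ _
      rw [Real.dist_eq, abs_sub_lt_iff]
      constructor
      · linarith [hr.2]
      · linarith [hr.1]
    have haq : ∀ r ∈ Set.Icc a r₀, q₀/2 ≤ q r := fun r hr => le_of_lt ((hδ (hIccd r hr)).1.1)
    have haQ : ∀ r ∈ Set.Icc a r₀, deriv q r ≤ -(q₀/r₀) :=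
      fun r hr => le_of_lt ((hδ (hIccd r hr)).1.2)
    have haγ : ∀ r ∈ Set.Icc a r₀, deriv g r ≤ κ := fun r hr => le_of_lt ((hδ (hIccd r hr)).2)
    have hγ0 : ∀ r ∈ Set.Ioo 0 r₀, 0 ≤ deriv g r :=
      fun r hr => aux_deriv_nonneg hmono (hgdiff r) hr
    have keyclaim : ∀ x y, a ≤ x → x < y → y ≤ r₀ →
        ∃ r, r ∈ Set.Ioo x y ∧ q₀/4 ≤ deriv (deriv g) r := by
      intro x y hax hxy hyr
      have hsub : Set.Ioo x y ⊆ Set.Icc a r₀ := fun s hs =>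
        ⟨le_trans hax (le_of_lt hs.1), le_trans (le_of_lt hs.2) hyr⟩
      have hsub0 : ∀ s ∈ Set.Ioo x y, 0 < s := by
        intro s hs
        have := hs.1
        linarith [hax, hapos]
      by_cases hD1 : ∃ x' y', x ≤ x' ∧ x' < y' ∧ y' ≤ y ∧
          ∀ s ∈ Set.Ioo x' y', DifferentiableAt ℝ φa s
      · -- case b1 : genuine interval
        obtain ⟨x', y', hxx', hx'y', hy'y, hDall⟩ := hD1
        have hsubxy' : Set.Ioo x' y' ⊆ Set.Ioo x y := Set.Ioo_subset_Ioo hxx' hy'y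
        have hpos' : ∀ s ∈ Set.Ioo x' y', 0 < s := fun s hs => hsub0 s (hsubxy' hs)
        have hBa : ∃ r ∈ Set.Ioo x' y', DifferentiableAt ℝ (deriv φa) r := by
          by_contra hno
          push_neg at hno
          set r₁ := (x' + y')/2 with hr₁def
          have hr₁ : r₁ ∈ Set.Ioo x' y' := ⟨by rw [hr₁def]; linarith, by rw [hr₁def]; linarith⟩
          have hr₁pos : 0 < r₁ := hpos' r₁ hr₁
          have hform : ∀ s ∈ Set.Ioo x' y', deriv φa s
              = ((2*N-2)*Real.sin (φa s) + Real.sin (2*φa s)/2) / ((2*N-1)*s + s^3/2) := by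
            intro s hs
            have hspos : 0 < s := hpos' s hs
            have hden : 0 < (2*N-1)*s + s^3/2 := by nlinarith [pow_pos hspos 3]
            have hs2 : (s:ℝ)^2 ≠ 0 := pow_ne_zero _ (ne_of_gt hspos)
            have hode := hodea s hspos
            rw [deriv_zero_of_not_differentiableAt (hno s hs), hη (φa s)] at hode
            rw [eq_div_iff (ne_of_gt hden)]
            have hfac : (2*N-1)*s + s^3/2 = s^2*((2*N-1)/s + s/2) := by
              field_simp
            rw [hfac]
            have h9 : ((2*N-1)/s + s/2) * deriv φa s
                = ((2*N-2)*Real.sin (φa s) + Real.sin (2*φa s)/2)/s^2 := by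
              linarith only [hode]
            have h10 := congrArg (fun z => z * s^2) h9
            skip
            rw [div_mul_cancel₀ _ hs2] at h10
            linear_combination h10
          apply hno r₁ hr₁
          have hev : deriv φa =ᶠ[nhds r₁]
              fun s => ((2*N-2)*Real.sin (φa s) + Real.sin (2*φa s)/2)
                / ((2*N-1)*s + s^3/2) := by
            filter_upwards [isOpen_Ioo.mem_nhds hr₁] with s hs
            exact hform s hs
          have hden : ((2*N-1)*r₁ + r₁^3/2) ≠ 0 := by nlinarith [pow_pos hr₁pos 3]
          have hφad : DifferentiableAt ℝ φa r₁ := hDall r₁ hr₁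
          have hnum : DifferentiableAt ℝ
              (fun s => (2*N-2)*Real.sin (φa s) + Real.sin (2*φa s)/2) r₁ := by
            apply DifferentiableAt.add
            · exact (hφad.sin).const_mul _
            · exact ((hφad.const_mul 2).sin).div_const 2
          have hdend : DifferentiableAt ℝ (fun s : ℝ => (2*N-1)*s + s^3/2) r₁ := by
            fun_prop
          exact ((hnum.div hdend hden).congr_of_eventuallyEq hev)
        obtain ⟨r, hrmem, hBad⟩ := hBa
        have hrxy : r ∈ Set.Ioo x y := hsubxy' hrmem
        have hrpos : 0 < r := hsub0 r hrxy
        have hrne : r ≠ 0 := ne_of_gt hrpos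
        refine ⟨r, hrxy, ?_⟩
        have hevd : deriv φb =ᶠ[nhds r] fun s => deriv φa s + deriv q s := by
          filter_upwards [isOpen_Ioo.mem_nhds hrmem] with s hs
          exact hderivb s (hpos' s hs) (hDall s hs)
        have hD2b : deriv (deriv φb) r = deriv (deriv φa) r + deriv (deriv q) r := by
          rw [hevd.deriv_eq, deriv_fun_add hBad (hQdiff r hrne)]
        have hD1b : deriv φb r = deriv φa r + deriv q r := hevd.self_of_nhds
        have ea := hodea r hrpos
        have eb := hodeb r hrpos
        rw [hη (φa r)] at ea
        rw [hη (φb r)] at eb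
        rw [hD2b, hD1b] at eb
        set Ea := (2*N-2)*Real.sin (φa r) + Real.sin (2*φa r)/2 with hEadef
        set Eb := (2*N-2)*Real.sin (φb r) + Real.sin (2*φb r)/2 with hEbdef
        have hr2ne : (r:ℝ)^2 ≠ 0 := pow_ne_zero _ hrne
        have E0 : deriv (deriv q) r + ((2*N-1)/r + r/2) * deriv q r
            = Eb/r^2 - Ea/r^2 := by
          have hexp : ((2*N-1)/r + r/2) * (deriv φa r + deriv q r)
              = ((2*N-1)/r + r/2) * deriv φa r + ((2*N-1)/r + r/2) * deriv q r :=
            mul_add _ _ _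
          rw [hexp] at eb
          linarith only [ea, eb]
        have E' : r^2 * deriv (deriv q) r + ((2*N-1)*r + r^3/2) * deriv q r = Eb - Ea := by
          have h2 := congrArg (fun z => r^2 * z) E0
          simp only [mul_sub, mul_add] at h2
          have hc1 : r^2 * (Eb/r^2) = Eb := by field_simp
          have hc2 : r^2 * (Ea/r^2) = Ea := by field_simp
          have hc3 : r^2 * (((2*N-1)/r + r/2) * deriv q r)
              = ((2*N-1)*r + r^3/2) * deriv q r := by
            field_simp
          rw [hc1, hc2, hc3] at h2
          linarith only [h2]
        have h1 : deriv g r = 2*r*q r + r^2*deriv q r := hgd1 r hrne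
        have h2 : deriv (deriv g) r = 2*q r + 4*r*deriv q r + r^2*deriv (deriv q) r :=
          hgd2 r hrne
        have h4 : g r = r^2 * q r := by
          simp only [hqdef]
          field_simp
        have keyeq : r^2 * deriv (deriv g) r
            = (4*N - 8 + r^2) * g r + r^2*(Eb - Ea) - ((2*N-5)*r + r^3/2) * deriv g r := by
          linear_combination r^2*h2 + r^2*E' - (4*N-8+r^2)*h4 + ((2*N-5)*r + r^3/2)*h1
        have hrIcc : r ∈ Set.Icc a r₀ := hsub hrxy
        have hqr : q₀/2 ≤ q r := haq r hrIcc
        have hγ1 : deriv g r ≤ κ := haγ r hrIcc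
        have hγ2 : 0 ≤ deriv g r := hγ0 r ⟨hrpos, lt_of_lt_of_le hrxy.2 hyr⟩
        have hr12 : r₀/2 ≤ r := le_trans ha2 hrIcc.1
        have hrr₀ : r ≤ r₀ := hrIcc.2
        have hqrel : φb r - φa r = q r := by rw [hphi r hrne]; ring
        have hφab : φa r ≤ φb r := by
          have h5 := hphi r hrne
          linarith only [hqr, hq₀pos, h5]
        have hlip : -((2*N-3)*(φb r - φa r)) ≤ Eb - Ea := by
          rw [hEadef, hEbdef]
          exact aux_eta_lip hN3 hφab
        rw [hqrel] at hlip
        have hr2pos : 0 < r^2 := by positivity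
        have hqrpos : 0 < q r := by linarith only [hqr, hq₀pos]
        have t1 : r^2 * (-((2*N-3)*q r)) ≤ r^2*(Eb - Ea) :=
          mul_le_mul_of_nonneg_left hlip hr2pos.le
        have s2 : ((2*N-5)*r + r^3/2) ≤ r^2 * M := by
          have e1 : (2*N-5)*r ≤ r^2 * (2*(2*N-5)/r₀) := by
            rw [← sub_nonneg]
            have hid : r^2 * (2*(2*N-5)/r₀) - (2*N-5)*r
                = ((2*N-5)*(r*(2*r - r₀)))/r₀ := by
              field_simp
            rw [hid]
            apply div_nonneg _ hr₀.le
            exact mul_nonneg (by linarith only [hNn])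
              (mul_nonneg hrpos.le (by linarith only [hr12]))
          have e2 : r^3/2 ≤ r^2 * (r₀/2) := by
            have h := mul_le_mul_of_nonneg_left hrr₀ hr2pos.le
            calc r^3/2 = (r^2*r)/2 := by ring
              _ ≤ (r^2*r₀)/2 := by linarith only [h]
              _ = r^2*(r₀/2) := by ring
          have e3 := mul_add (r^2) (2*(2*N-5)/r₀) (r₀/2)
          rw [hMdef]
          linarith only [e1, e2, e3]
        have s3 : ((2*N-5)*r + r^3/2) * deriv g r ≤ r^2 * (q₀/4) := by
          calc ((2*N-5)*r + r^3/2) * deriv g r ≤ (r^2*M) * deriv g r :=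
                mul_le_mul_of_nonneg_right s2 hγ2
            _ ≤ (r^2*M) * κ :=
                mul_le_mul_of_nonneg_left hγ1 (mul_pos hr2pos hMpos).le
            _ = r^2 * (q₀/4) := by rw [mul_assoc, hMκ]
        have hP : r^2 * (q₀/2) ≤ r^2 * q r := mul_le_mul_of_nonneg_left hqr hr2pos.le
        have hPpos : 0 < r^2 * q r := mul_pos hr2pos hqrpos
        have hh1 : 0 ≤ (2*N-6) * (r^2 * q r) :=
          mul_nonneg (by linarith only [hNn]) hPpos.le
        have hh2 : 0 ≤ r^2 * (r^2 * q r) := mul_nonneg hr2pos.le hPpos.le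
        have s4 : r^2 * (q₀/4) ≤ r^2 * deriv (deriv g) r := by
          clear_value N q q₀ Ea Eb
          rw [keyeq, h4]
          linarith only [t1, s3, hP, hh1, hh2, hq₀pos, hr2pos, hNn]
        exact le_of_mul_le_mul_left s4 hr2pos
      · push_neg at hD1
        exfalso
        by_cases hD2 : ∀ x' y', x ≤ x' → x' < y' → y' ≤ y →
            ∃ s, s ∈ Set.Ioo x' y' ∧ DifferentiableAt ℝ φa s
        · -- case b2 : both D and its complement dense
          have hstep1 : ∀ r ∈ Set.Ioo x y, ¬DifferentiableAt ℝ φa r →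
              (Real.sin (φa r) = 0 ∨ Real.sin (φb r) = 0) := by
            intro r hr hnda
            have hrpos : 0 < r := hsub0 r hr
            have hrne : r ≠ 0 := ne_of_gt hrpos
            have hndb : ¬DifferentiableAt ℝ φb r := fun h => hnda ((hiff r hrpos).mp h)
            have hBa0 : deriv φa r = 0 := deriv_zero_of_not_differentiableAt hnda
            have hBb0 : deriv φb r = 0 := deriv_zero_of_not_differentiableAt hndb
            by_cases hBad : DifferentiableAt ℝ (deriv φa) r
            · by_cases hBbd : DifferentiableAt ℝ (deriv φb) r
              · exfalso
                have hne : (nhdsWithin r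
                    ({s | s ∈ Set.Ioo x y ∧ DifferentiableAt ℝ φa s} \ {r})).NeBot := by
                  apply aux_neBot hr
                  intro x' y' h1 h2 h3
                  obtain ⟨s, hs1, hs2⟩ := hD2 x' y' h1 h2 h3
                  exact ⟨s, hs1, ⟨Set.Ioo_subset_Ioo h1 h3 hs1, hs2⟩⟩
                have hval : deriv φb r - deriv φa r - deriv q r = 0 :=
                  aux_val_eq (f := fun s => deriv φb s - deriv φa s - deriv q s) hne
                    ((hBbd.continuousAt.sub hBad.continuousAt).sub (hQcont r hrne))
                    (fun s hs => by
                      have h := hderivb s (hsub0 s hs.1) hs.2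
                      show deriv φb s - deriv φa s - deriv q s = 0
                      linarith only [h])
                rw [hBa0, hBb0] at hval
                have h7 := haQ r (hsub hr)
                have h8 := div_pos hq₀pos hr₀
                linarith only [hval, h7, h8]
              · right
                have hode' := hodeb r hrpos
                rw [deriv_zero_of_not_differentiableAt hBbd, hBb0, hη (φb r)] at hode'
                simp only [mul_zero, add_zero, zero_add, zero_sub, neg_eq_zero] at hode'
                rcases div_eq_zero_iff.mp hode' with h | h
                · exact aux_eta_zero hN3 h
                · exact absurd h (pow_ne_zero 2 hrne)
            · left
              have hode' := hodea r hrpos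
              rw [deriv_zero_of_not_differentiableAt hBad, hBa0, hη (φa r)] at hode'
              simp only [mul_zero, add_zero, zero_add, zero_sub, neg_eq_zero] at hode'
              rcases div_eq_zero_iff.mp hode' with h | h
              · exact aux_eta_zero hN3 h
              · exact absurd h (pow_ne_zero 2 hrne)
          have star : ∀ ψ : ℝ → ℝ,
              (∀ r, 0 < r → deriv (deriv ψ) r + ((2*N-1)/r + r/2) * deriv ψ r
                - η (ψ r)/r^2 = 0) →
              (∀ r, 0 < r → (DifferentiableAt ℝ ψ r ↔ DifferentiableAt ℝ φa r)) →
              ∀ c d, x ≤ c → c < d → d ≤ y →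
              (∀ x' y', c ≤ x' → x' < y' → y' ≤ d →
                ∃ s, s ∈ Set.Ioo x' y' ∧ (¬DifferentiableAt ℝ φa s ∧ Real.sin (ψ s) = 0)) →
              False := by
            intro ψ hode hψiff c d hxc hcd hdy hT
            set T : Set ℝ := {s | s ∈ Set.Ioo c d ∧ ¬DifferentiableAt ℝ φa s ∧
              Real.sin (ψ s) = 0} with hTdef
            have hTmem : ∀ s, s ∈ Set.Ioo c d → ¬DifferentiableAt ℝ φa s →
                Real.sin (ψ s) = 0 → s ∈ T := by
              intro s h1 h2 h3
              rw [hTdef]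
              exact ⟨h1, h2, h3⟩
            have hTprop : ∀ s, s ∈ T → s ∈ Set.Ioo c d ∧ ¬DifferentiableAt ℝ φa s ∧
                Real.sin (ψ s) = 0 := by
              intro s hs
              rw [hTdef] at hs
              exact hs
            have hTdense : ∀ x' y', c ≤ x' → x' < y' → y' ≤ d →
                ∃ s, s ∈ Set.Ioo x' y' ∧ s ∈ T := by
              intro x' y' h1 h2 h3
              obtain ⟨s, hs1, hs2⟩ := hT x' y' h1 h2 h3
              exact ⟨s, hs1, hTmem s ⟨lt_of_le_of_lt h1 hs1.1, lt_of_lt_of_le hs1.2 h3⟩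
                hs2.1 hs2.2⟩
            have hsubcd : Set.Ioo c d ⊆ Set.Ioo x y := Set.Ioo_subset_Ioo hxc hdy
            have hposcd : ∀ s ∈ Set.Ioo c d, 0 < s := fun s hs => hsub0 s (hsubcd hs)
            have hsinD : ∀ r ∈ Set.Ioo c d, DifferentiableAt ℝ φa r →
                Real.sin (ψ r) = 0 := by
              intro r hr hda
              have hdψ : DifferentiableAt ℝ ψ r := (hψiff r (hposcd r hr)).mpr hda
              have hne : (nhdsWithin r (T \ {r})).NeBot := aux_neBot hr hTdense
              exact aux_val_eq (f := fun s => Real.sin (ψ s)) hne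
                (Real.continuous_sin.continuousAt.comp hdψ.continuousAt)
                (fun s hs => (hTprop s hs).2.2)
            have hBψ0 : ∀ r ∈ Set.Ioo c d, deriv ψ r = 0 := by
              intro r hr
              by_cases hda : DifferentiableAt ℝ φa r
              · have hdψ : DifferentiableAt ℝ ψ r := (hψiff r (hposcd r hr)).mpr hda
                obtain ⟨δ₁, hδ₁pos, hball⟩ :=
                  Metric.continuousAt_iff.mp hdψ.continuousAt Real.pi Real.pi_pos
                have hne : (nhdsWithin r (T \ {r})).NeBot := aux_neBot hr hTdense
                apply aux_deriv_zero hdψ.hasDerivAt hne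
                have hmem0 : ∀ᶠ s in nhds r, dist s r < δ₁ := by
                  filter_upwards [Metric.ball_mem_nhds r hδ₁pos] with t ht
                  rwa [Metric.mem_ball] at ht
                have hmem : ∀ᶠ s in nhdsWithin r (T \ {r}), dist s r < δ₁ :=
                  eventually_nhdsWithin_of_eventually_nhds hmem0
                filter_upwards [hmem, self_mem_nhdsWithin] with s hs1 hs2
                apply aux_sin_eq (hTprop s hs2.1).2.2 (hsinD r hr hda)
                have := hball hs1
                rwa [Real.dist_eq] at this
              · exact deriv_zero_of_not_differentiableAt
                  (fun h => hda ((hψiff r (hposcd r hr)).mp h))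
            have hsinall : ∀ r ∈ Set.Ioo c d, Real.sin (ψ r) = 0 := by
              intro r hr
              have hddψ : deriv (deriv ψ) r = 0 := by
                have hev : deriv ψ =ᶠ[nhds r] fun _ => (0:ℝ) := by
                  filter_upwards [isOpen_Ioo.mem_nhds hr] with t ht
                  exact hBψ0 t ht
                rw [hev.deriv_eq]
                exact deriv_const _ _
              have hode' := hode r (hposcd r hr)
              rw [hddψ, hBψ0 r hr, hη (ψ r)] at hode'
              simp only [mul_zero, add_zero, zero_add, zero_sub, neg_eq_zero] at hode'
              rcases div_eq_zero_iff.mp hode' with h | h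
              · exact aux_eta_zero hN3 h
              · exact absurd h (pow_ne_zero 2 (ne_of_gt (hposcd r hr)))
            obtain ⟨r, hr, hda⟩ := hD2 c d hxc hcd hdy
            have hdψ : DifferentiableAt ℝ ψ r := (hψiff r (hposcd r hr)).mpr hda
            obtain ⟨δ₁, hδ₁pos, hball⟩ :=
              Metric.continuousAt_iff.mp hdψ.continuousAt Real.pi Real.pi_pos
            set δ₂ := min δ₁ (min (r - c) (d - r)) with hδ₂def
            have hδ₂pos : 0 < δ₂ := by
              rw [hδ₂def]
              exact lt_min hδ₁pos (lt_min (by linarith [hr.1]) (by linarith [hr.2]))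
            have hδle1 : δ₂ ≤ δ₁ := by rw [hδ₂def]; exact min_le_left _ _
            have hδle2 : δ₂ ≤ r - c := by
              rw [hδ₂def]
              exact le_trans (min_le_right _ _) (min_le_left _ _)
            have hδle3 : δ₂ ≤ d - r := by
              rw [hδ₂def]
              exact le_trans (min_le_right _ _) (min_le_right _ _)
            have hballIoo : ∀ s ∈ Metric.ball r δ₂, s ∈ Set.Ioo c d := by
              intro s hs
              rw [Metric.mem_ball, Real.dist_eq] at hs
              have habs := abs_lt.mp hs
              exact ⟨by linarith [habs.1], by linarith [habs.2]⟩
            have hconst : ∀ s ∈ Metric.ball r δ₂, ψ s = ψ r := by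
              intro s hs
              have hsIoo := hballIoo s hs
              apply aux_sin_eq (hsinall s hsIoo) (hsinall r hr)
              rw [Metric.mem_ball] at hs
              have := hball (lt_of_lt_of_le hs hδle1)
              rwa [Real.dist_eq] at this
            obtain ⟨s, hs1, hs2⟩ := hD1 (max c (r - δ₂/2)) (min d (r + δ₂/2))
              (le_trans hxc (le_max_left _ _))
              (by
                apply max_lt
                · exact lt_min hcd (by linarith [hr.1])
                · exact lt_min (by linarith [hr.2]) (by linarith))
              (le_trans (min_le_left _ _) hdy)
            have hsball : s ∈ Metric.ball r δ₂ := by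
              rw [Metric.mem_ball, Real.dist_eq, abs_sub_lt_iff]
              have h1 := hs1.1
              have h2 := hs1.2
              have h3 : r - δ₂/2 ≤ max c (r - δ₂/2) := le_max_right _ _
              have h4 : min d (r + δ₂/2) ≤ r + δ₂/2 := min_le_right _ _
              constructor <;> linarith
            have hsdiff : DifferentiableAt ℝ ψ s := by
              have hev : ψ =ᶠ[nhds s] fun _ => ψ r := by
                filter_upwards [Metric.isOpen_ball.mem_nhds hsball] with t ht
                exact hconst t ht
              exact (differentiableAt_const _).congr_of_eventuallyEq hev
            have hspos : 0 < s := hposcd s (hballIoo s hsball)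
            exact hs2 ((hψiff s hspos).mp hsdiff)
          by_cases hEa : ∀ x' y', x ≤ x' → x' < y' → y' ≤ y →
              ∃ s, s ∈ Set.Ioo x' y' ∧ (¬DifferentiableAt ℝ φa s ∧ Real.sin (φa s) = 0)
          · exact star φa hodea (fun r hr => Iff.rfl) x y (le_refl _) hxy (le_refl _) hEa
          · push_neg at hEa
            obtain ⟨x', y', h1, h2, h3, hnoa⟩ := hEa
            apply star φb hodeb (fun r hr => hiff r hr) x' y' h1 h2 h3
            intro x'' y'' g1 g2 g3
            obtain ⟨s, hs1, hs2⟩ := hD1 x'' y'' (le_trans h1 g1) g2 (le_trans g3 h3)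
            refine ⟨s, hs1, hs2, ?_⟩
            have hsxy : s ∈ Set.Ioo x y :=
              Set.Ioo_subset_Ioo (le_trans h1 g1) (le_trans g3 h3) hs1
            rcases hstep1 s hsxy hs2 with h | h
            · exact absurd h (hnoa s (Set.Ioo_subset_Ioo g1 g3 hs1) hs2)
            · exact h
        · -- case ii : an interval with no differentiability point
          push_neg at hD2
          obtain ⟨x'', y'', hxx, hxy2, hyy, hnone⟩ := hD2
          set r₁ := (x'' + y'')/2 with hr₁def
          have hr₁ : r₁ ∈ Set.Ioo x'' y'' :=
            ⟨by rw [hr₁def]; linarith, by rw [hr₁def]; linarith⟩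
          have hsubxy : Set.Ioo x'' y'' ⊆ Set.Ioo x y := Set.Ioo_subset_Ioo hxx hyy
          have hsin : ∀ s ∈ Set.Ioo x'' y'', Real.sin (φa s) = 0 ∧ Real.sin (φb s) = 0 := by
            intro s hs
            have hspos : 0 < s := hsub0 s (hsubxy hs)
            have hsne : s ≠ 0 := ne_of_gt hspos
            have hnda : ¬DifferentiableAt ℝ φa s := hnone s hs
            have hndb : ¬DifferentiableAt ℝ φb s := fun h => hnda ((hiff s hspos).mp h)
            have hev : deriv φa =ᶠ[nhds s] fun _ => (0:ℝ) := by
              filter_upwards [isOpen_Ioo.mem_nhds hs] with t ht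
              exact deriv_zero_of_not_differentiableAt (hnone t ht)
            have hdd : deriv (deriv φa) s = 0 := by
              rw [hev.deriv_eq]
              exact deriv_const _ _
            have hevb : deriv φb =ᶠ[nhds s] fun _ => (0:ℝ) := by
              filter_upwards [isOpen_Ioo.mem_nhds hs] with t ht
              exact deriv_zero_of_not_differentiableAt
                (fun h => (hnone t ht) ((hiff t (hsub0 t (hsubxy ht))).mp h))
            have hddb : deriv (deriv φb) s = 0 := by
              rw [hevb.deriv_eq]
              exact deriv_const _ _
            have ea := hodea s hspos
            have eb := hodeb s hspos
            rw [hdd, deriv_zero_of_not_differentiableAt hnda, hη (φa s)] at ea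
            rw [hddb, deriv_zero_of_not_differentiableAt hndb, hη (φb s)] at eb
            simp only [mul_zero, add_zero, zero_add, zero_sub, neg_eq_zero] at ea eb
            constructor
            · rcases div_eq_zero_iff.mp ea with h | h
              · exact aux_eta_zero hN3 h
              · exact absurd h (pow_ne_zero 2 hsne)
            · rcases div_eq_zero_iff.mp eb with h | h
              · exact aux_eta_zero hN3 h
              · exact absurd h (pow_ne_zero 2 hsne)
          have hqsin : ∀ s ∈ Set.Ioo x'' y'', Real.sin (q s) = 0 := by
            intro s hs
            obtain ⟨ka, hka⟩ := Real.sin_eq_zero_iff.mp (hsin s hs).1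
            obtain ⟨kb, hkb⟩ := Real.sin_eq_zero_iff.mp (hsin s hs).2
            have hq1 : q s = ((kb - ka : ℤ) : ℝ) * Real.pi := by
              have h3 := hphi s (ne_of_gt (hsub0 s (hsubxy hs)))
              push_cast
              linarith only [hka, hkb, h3]
            rw [hq1]
            exact Real.sin_int_mul_pi _
          have hr₁pos : 0 < r₁ := hsub0 r₁ (hsubxy hr₁)
          have hc : ContinuousAt q r₁ := hqcont r₁ (ne_of_gt hr₁pos)
          obtain ⟨δ₁, hδ₁pos, hball⟩ := Metric.continuousAt_iff.mp hc Real.pi Real.pi_pos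
          set δ₂ := min δ₁ (min (r₁ - x'') (y'' - r₁)) with hδ₂def
          have hδ₂pos : 0 < δ₂ := by
            rw [hδ₂def]
            exact lt_min hδ₁pos (lt_min (by linarith [hr₁.1]) (by linarith [hr₁.2]))
          have hδle1 : δ₂ ≤ δ₁ := by rw [hδ₂def]; exact min_le_left _ _
          have hδle2 : δ₂ ≤ r₁ - x'' := by
            rw [hδ₂def]
            exact le_trans (min_le_right _ _) (min_le_left _ _)
          have hδle3 : δ₂ ≤ y'' - r₁ := by
            rw [hδ₂def]
            exact le_trans (min_le_right _ _) (min_le_right _ _)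
          have hqconst : q =ᶠ[nhds r₁] fun _ => q r₁ := by
            filter_upwards [Metric.ball_mem_nhds r₁ hδ₂pos] with s hs
            rw [Metric.mem_ball, Real.dist_eq] at hs
            have habs := abs_lt.mp hs
            have hsIoo : s ∈ Set.Ioo x'' y'' := ⟨by linarith [habs.1], by linarith [habs.2]⟩
            apply aux_sin_eq (hqsin s hsIoo) (hqsin r₁ hr₁)
            have := hball (show dist s r₁ < δ₁ by rw [Real.dist_eq]; linarith [abs_lt.mpr habs, hδle1])
            rwa [Real.dist_eq] at this
          have hdq0 : deriv q r₁ = 0 := by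
            rw [hqconst.deriv_eq]
            exact deriv_const _ _
          have h7 := haQ r₁ (hsub (hsubxy hr₁))
          have h8 := div_pos hq₀pos hr₀
          linarith only [hdq0, h7, h8]
    have hfin : q₀/4 ≤ deriv (deriv g) r₀ := by
      by_contra hcon
      push_neg at hcon
      have hevf : ∀ᶠ s in nhds r₀, deriv (deriv g) s < q₀/4 :=
        (hddgcont.continuousAt).eventually (eventually_lt_nhds hcon)
      obtain ⟨δ', hδ'pos, hδ'⟩ := Metric.eventually_nhds_iff.mp hevf
      set x := max a (r₀ - δ'/2) with hxdef
      have hxr : x < r₀ := by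
        rw [hxdef]
        exact max_lt har (by linarith)
      obtain ⟨r, hr1, hr2⟩ := keyclaim x r₀ (by rw [hxdef]; exact le_max_left _ _) hxr (le_refl _)
      have hdist : dist r r₀ < δ' := by
        have h1 : r₀ - δ'/2 ≤ x := by rw [hxdef]; exact le_max_right _ _
        rw [Real.dist_eq, abs_sub_lt_iff]
        constructor
        · linarith [hr1.2]
        · linarith [hr1.1]
      exact absurd hr2 (not_le.mpr (hδ' hdist))
    linarith only [hfin, hq₀pos]
  -- g 0 = 0
  have hg0 : g 0 = 0 := by rw [hg 0]; ring
  have hεmono : StrictMonoOn g (Set.Ioo 0 ε) :=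
    hmε.mono (fun s hs => ⟨le_of_lt hs.1, le_of_lt hs.2⟩)
  -- from a zero of g' with positive g'' extract a negative g' point on the left
  have hslopeneg : ∀ r₂ : ℝ, 0 < r₂ → deriv g r₂ = 0 → 0 < deriv (deriv g) r₂ →
      ∃ s, s ∈ Set.Ioo 0 r₂ ∧ deriv g s < 0 := by
    intro r₂ hr₂ hz hposd
    have H : HasDerivAt (deriv g) (deriv (deriv g) r₂) r₂ := (hdgdiff r₂).hasDerivAt
    have htt : Filter.Tendsto (slope (deriv g) r₂) (nhdsWithin r₂ (Set.Iio r₂))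
        (nhds (deriv (deriv g) r₂)) :=
      (hasDerivAt_iff_tendsto_slope.mp H).mono_left
        (nhdsWithin_mono _ (fun s hs => ne_of_lt hs))
    have hev : ∀ᶠ s in nhdsWithin r₂ (Set.Iio r₂), 0 < slope (deriv g) r₂ s :=
      htt.eventually (eventually_gt_nhds hposd)
    have hev2 : ∀ᶠ s in nhdsWithin r₂ (Set.Iio r₂), 0 < s :=
      eventually_nhdsWithin_of_eventually_nhds (eventually_gt_nhds hr₂)
    obtain ⟨s, hs1, hs2, hs3⟩ := (hev.and (hev2.and self_mem_nhdsWithin)).exists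
    have hslt : s < r₂ := hs3
    refine ⟨s, ⟨hs2, hslt⟩, ?_⟩
    have hsl : slope (deriv g) r₂ s = deriv g s / (s - r₂) := by
      rw [slope_def_field, hz, sub_zero]
    by_contra hge
    push_neg at hge
    have hneg : s - r₂ < 0 := by linarith
    have : slope (deriv g) r₂ s ≤ 0 := by
      rw [hsl]
      exact div_nonpos_of_nonneg_of_nonpos hge (le_of_lt hneg)
    linarith
  -- g' never vanishes on (0,∞)
  have hnever : ∀ r : ℝ, 0 < r → deriv g r ≠ 0 := by
    intro r₁ hr₁ hzero
    set S : Set ℝ := {s | s ∈ Set.Ioc 0 r₁ ∧ deriv g s = 0} with hSdef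
    have hmemS : ∀ s, s ∈ Set.Ioc 0 r₁ → deriv g s = 0 → s ∈ S := by
      intro s h1 h2
      rw [hSdef]
      exact ⟨h1, h2⟩
    have hSprop : ∀ s, s ∈ S → s ∈ Set.Ioc 0 r₁ ∧ deriv g s = 0 := by
      intro s hs
      rw [hSdef] at hs
      exact hs
    have hSne : S.Nonempty := ⟨r₁, hmemS r₁ ⟨hr₁, le_refl _⟩ hzero⟩
    have hSbdd : BddBelow S := ⟨0, fun s hs => le_of_lt (hSprop s hs).1.1⟩
    set r₀ := sInf S with hr₀def
    have hr₀cl : r₀ ∈ closure S := csInf_mem_closure hSne hSbdd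
    have hr₀z : deriv g r₀ = 0 := by
      have hclosed : IsClosed {s : ℝ | deriv g s = 0} := isClosed_eq hcontdg continuous_const
      exact closure_minimal (fun s hs => (hSprop s hs).2) hclosed hr₀cl
    have hr₀mem : r₀ ∈ Set.Icc 0 r₁ := by
      have hsub : S ⊆ Set.Icc 0 r₁ := fun s hs =>
        ⟨le_of_lt (hSprop s hs).1.1, (hSprop s hs).1.2⟩
      exact closure_minimal hsub isClosed_Icc hr₀cl
    by_cases hr₀pos : 0 < r₀
    · have hno : ∀ s ∈ Set.Ioo 0 r₀, deriv g s ≠ 0 := by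
        intro s hs hzs
        have : r₀ ≤ s := csInf_le hSbdd
          (hmemS s ⟨hs.1, le_trans (le_of_lt hs.2) hr₀mem.2⟩ hzs)
        linarith [hs.2]
      have hspos : ∀ s ∈ Set.Ioo 0 r₀, 0 < deriv g s := by
        intro s hs
        rcases lt_or_gt_of_ne (hno s hs) with hlt | hgt
        · exfalso
          set s₀ := min ε r₀ / 2 with hs₀def
          have hs₀pos : 0 < s₀ := by
            have := lt_min hε hr₀pos
            simp only [hs₀def]
            linarith
          have hs₀r₀ : s₀ < r₀ := by
            have : min ε r₀ ≤ r₀ := min_le_right _ _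
            simp only [hs₀def]; linarith
          have hs₀ε : s₀ < ε := by
            have : min ε r₀ ≤ ε := min_le_left _ _
            simp only [hs₀def]; linarith
          have h0 : 0 ≤ deriv g s₀ := aux_deriv_nonneg hεmono (hgdiff s₀) ⟨hs₀pos, hs₀ε⟩
          have hgt0 : 0 < deriv g s₀ := lt_of_le_of_ne h0 (Ne.symm (hno s₀ ⟨hs₀pos, hs₀r₀⟩))
          have hctn : ContinuousOn (deriv g) (Set.uIcc s s₀) := hcontdg.continuousOn
          have h0mem : (0:ℝ) ∈ Set.uIcc (deriv g s) (deriv g s₀) := by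
            rw [Set.mem_uIcc]
            left
            exact ⟨le_of_lt hlt, le_of_lt hgt0⟩
          obtain ⟨t, ht1, ht2⟩ := intermediate_value_uIcc hctn h0mem
          have htmem : t ∈ Set.Ioo 0 r₀ := by
            rw [Set.uIcc_eq_union] at ht1
            rcases ht1 with h | h
            · exact ⟨lt_of_lt_of_le hs.1 h.1, lt_of_le_of_lt h.2 hs₀r₀⟩
            · exact ⟨lt_of_lt_of_le hs₀pos h.1, lt_of_le_of_lt h.2 hs.2⟩
          exact hno t htmem ht2
        · exact hgt
      have hmono' : StrictMonoOn g (Set.Icc 0 r₀) := by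
        apply strictMonoOn_of_deriv_pos (convex_Icc 0 r₀) (hgC2.continuous.continuousOn)
        intro t ht
        rw [interior_Icc] at ht
        exact hspos t ht
      have hgr₀pos : 0 < g r₀ := by
        have := hmono' (Set.left_mem_Icc.mpr (le_of_lt hr₀pos))
          (Set.right_mem_Icc.mpr (le_of_lt hr₀pos)) hr₀pos
        rwa [hg0] at this
      have hP := P1 r₀ hr₀pos hr₀z hgr₀pos
        (hmono'.mono (fun s hs => ⟨le_of_lt hs.1, le_of_lt hs.2⟩))
      obtain ⟨s, hsmem, hsneg⟩ := hslopeneg r₀ hr₀pos hr₀z hP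
      exact absurd (hspos s hsmem) (by linarith)
    · have hr₀0 : r₀ = 0 := le_antisymm (not_lt.mp hr₀pos) hr₀mem.1
      have hex : ∃ r₂ ∈ S, r₂ < ε := by
        obtain ⟨s, hsS, hd⟩ := Metric.mem_closure_iff.mp (hr₀0 ▸ hr₀cl) ε hε
        refine ⟨s, hsS, ?_⟩
        rw [Real.dist_eq] at hd
        have hspos := (hSprop s hsS).1.1
        rw [abs_sub_comm, abs_of_pos (by linarith : (0:ℝ) < s - 0)] at hd
        linarith
      obtain ⟨r₂, hr₂S', hr₂ε⟩ := hex
      have hr₂S := hSprop r₂ hr₂S'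
      have hr₂pos : 0 < r₂ := hr₂S.1.1
      have hmono2 : StrictMonoOn g (Set.Ioo 0 r₂) :=
        hεmono.mono (Set.Ioo_subset_Ioo (le_refl _) (le_of_lt hr₂ε))
      have hg2 : 0 < g r₂ := by
        have := hmε ⟨le_refl _, le_of_lt hε⟩ ⟨le_of_lt hr₂pos, le_of_lt hr₂ε⟩ hr₂pos
        rwa [hg0] at this
      have hP := P1 r₂ hr₂pos hr₂S.2 hg2 hmono2
      obtain ⟨s, hsmem, hsneg⟩ := hslopeneg r₂ hr₂pos hr₂S.2 hP
      have : 0 ≤ deriv g s :=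
        aux_deriv_nonneg hεmono (hgdiff s) ⟨hsmem.1, lt_trans hsmem.2 hr₂ε⟩
      linarith
  have hpos : ∀ r : ℝ, 0 < r → 0 < deriv g r := by
    intro r hr
    rcases lt_or_gt_of_ne (hnever r hr) with hlt | hgt
    · exfalso
      set s₀ := ε/2 with hs₀def
      have hs₀pos : 0 < s₀ := by simp only [hs₀def]; linarith
      have h0 : 0 ≤ deriv g s₀ :=
        aux_deriv_nonneg hεmono (hgdiff _) ⟨hs₀pos, by simp only [hs₀def]; linarith⟩
      have hgt0 : 0 < deriv g s₀ := lt_of_le_of_ne h0 (Ne.symm (hnever s₀ hs₀pos))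
      have hctn : ContinuousOn (deriv g) (Set.uIcc r s₀) := hcontdg.continuousOn
      have h0mem : (0:ℝ) ∈ Set.uIcc (deriv g r) (deriv g s₀) := by
        rw [Set.mem_uIcc]
        left
        exact ⟨le_of_lt hlt, le_of_lt hgt0⟩
      obtain ⟨t, ht1, ht2⟩ := intermediate_value_uIcc hctn h0mem
      have htpos : 0 < t := by
        rw [Set.uIcc_eq_union] at ht1
        rcases ht1 with h | h
        · exact lt_of_lt_of_le hr h.1
        · exact lt_of_lt_of_le hs₀pos h.1
      exact hnever t htpos ht2
    · exact hgt
  refine ⟨fun r₀ hr₀ h1 h2 h3 => P1 r₀ hr₀ h1 h2 h3,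
    fun r hr hmax => hnever r hr hmax.deriv_eq_zero, ?_⟩
  intro r hr
  have hmono' : StrictMonoOn g (Set.Icc 0 r) := by
    apply strictMonoOn_of_deriv_pos (convex_Icc 0 r) (hgC2.continuous.continuousOn)
    intro t ht
    rw [interior_Icc] at ht
    exact hpos t ht.1
  have hgr : 0 < g r := by
    have := hmono' (Set.left_mem_Icc.mpr (le_of_lt hr)) (Set.right_mem_Icc.mpr (le_of_lt hr)) hr
    rwa [hg0] at this
  have hgr2 := hg r
  nlinarith [sq_nonneg r, hr, hgr]
end
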